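/- arXiv:2501.04211 — 4 statements merged into one kernel-verified Lean document; each statement's English description precedes it below -/
import Mathlib

section
/- Let W be a real m×n matrix and let 1 ≤ r < min(m,n). Let P be the m×r matrix whose columns are the leading r left singular vectors of W and let Q be the n×r matrix whose columns are the leading r right singular vectors of W (so P and Q have orthonormal columns). Let p be a list of r distinct row indices and q a list of r distinct column indices such that the r×r submatrices P[p,:] (the rows of P indexed by p) and Q[q,:] (the rows of Q indexed by q) are invertible. Set C = W[:,q] (the m×r matrix of the columns of W indexed by q), R = W[p,:] (the r×n matrix of the rows of W indexed by p), and U = C† W R†, where † denotes the Moore–Penrose pseudoinverse. Then the spectral norm of the approximation error satisfies ‖W − C U R‖₂ ≤ (η_p + η_q) σ_{r+1}, where η_p = ‖(P[p,:])⁻¹‖₂, η_q = ‖(Q[q,:])⁻¹‖₂, and σ_{r+1} is the (r+1)-st largest singular value of W. -/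
open Matrix

/-- The spectral norm of a real matrix: the operator norm of the induced linear
map between Euclidean spaces. -/
noncomputable def specNorm {a b : ℕ} (A : Matrix (Fin a) (Fin b) ℝ) : ℝ :=
  ‖LinearMap.toContinuousLinearMap (Matrix.toEuclideanLin A)‖

/-- `Ad` is the Moore–Penrose pseudoinverse of `A`: it satisfies the four
Penrose equations. -/
def IsMoorePenrose {a b : ℕ} (A : Matrix (Fin a) (Fin b) ℝ)
    (Ad : Matrix (Fin b) (Fin a) ℝ) : Prop :=
  A * Ad * A = A ∧ Ad * A * Ad = Ad ∧ (A * Ad)ᵀ = A * Ad ∧ (Ad * A)ᵀ = Ad * A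

open scoped Matrix.Norms.L2Operator RealInnerProductSpace

noncomputable def ev {k : ℕ} (v : Fin k → ℝ) : EuclideanSpace ℝ (Fin k) :=
  (WithLp.equiv 2 (Fin k → ℝ)).symm v

lemma specNorm_eq {a b : ℕ} (A : Matrix (Fin a) (Fin b) ℝ) : specNorm A = ‖A‖ := rfl

lemma ev_mulVec_le {a b : ℕ} (A : Matrix (Fin a) (Fin b) ℝ) (v : Fin b → ℝ) :
    ‖ev (A *ᵥ v)‖ ≤ ‖A‖ * ‖ev v‖ :=
  A.l2_opNorm_mulVec (ev v)

lemma specNorm_le_bound {a b : ℕ} (A : Matrix (Fin a) (Fin b) ℝ) {c : ℝ} (hc : 0 ≤ c)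
    (h : ∀ v : Fin b → ℝ, ‖ev (A *ᵥ v)‖ ≤ c * ‖ev v‖) : ‖A‖ ≤ c := by
  rw [Matrix.l2_opNorm_def]
  apply ContinuousLinearMap.opNorm_le_bound _ hc
  intro x
  exact h x

lemma ev_inner {k : ℕ} (u v : Fin k → ℝ) : ⟪ev u, ev v⟫ = u ⬝ᵥ v := by
  simp [ev, PiLp.inner_apply, dotProduct, mul_comm]

lemma ev_norm_sq {k : ℕ} (v : Fin k → ℝ) : ‖ev v‖ ^ 2 = v ⬝ᵥ v := by
  rw [← real_inner_self_eq_norm_sq, ev_inner]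

private lemma sq_le_imp {x y : ℝ} (hy : 0 ≤ y) (h : x ^ 2 ≤ y ^ 2) (hx : 0 ≤ x) : x ≤ y := by
  nlinarith

lemma dot_shift {a b : ℕ} (M : Matrix (Fin a) (Fin b) ℝ) (u : Fin a → ℝ) (w : Fin b → ℝ) :
    u ⬝ᵥ (M *ᵥ w) = (Mᵀ *ᵥ u) ⬝ᵥ w := by
  simp only [Matrix.mulVec, dotProduct, Matrix.transpose_apply, Finset.mul_sum, Finset.sum_mul]
  rw [Finset.sum_comm]
  apply Finset.sum_congr rfl; intro i _
  apply Finset.sum_congr rfl; intro j _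
  ring

lemma ev_mulVec_sq {a b : ℕ} (A : Matrix (Fin a) (Fin b) ℝ) (v : Fin b → ℝ) :
    ‖ev (A *ᵥ v)‖ ^ 2 = v ⬝ᵥ ((Aᵀ * A) *ᵥ v) := by
  rw [ev_norm_sq, dot_shift, dotProduct_comm, Matrix.mulVec_mulVec]

lemma ev_isometry {a b : ℕ} {A : Matrix (Fin a) (Fin b) ℝ} (hA : Aᵀ * A = 1)
    (v : Fin b → ℝ) : ‖ev (A *ᵥ v)‖ = ‖ev v‖ := by
  have h := ev_mulVec_sq A v
  rw [hA, Matrix.one_mulVec, ← ev_norm_sq] at h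
  nlinarith [norm_nonneg (ev (A *ᵥ v)), norm_nonneg (ev v)]

lemma specNorm_orth_le_one {a b : ℕ} {A : Matrix (Fin a) (Fin b) ℝ} (hA : Aᵀ * A = 1) :
    ‖A‖ ≤ 1 := by
  apply specNorm_le_bound A zero_le_one
  intro v
  rw [ev_isometry hA, one_mul]

lemma ev_diag_le {k : ℕ} {d : Fin k → ℝ} {c : ℝ} (hc : 0 ≤ c) (hd : ∀ i, |d i| ≤ c)
    (v : Fin k → ℝ) : ‖ev ((Matrix.diagonal d) *ᵥ v)‖ ≤ c * ‖ev v‖ := by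
  apply sq_le_imp (by positivity) _ (norm_nonneg _)
  rw [mul_pow, ev_norm_sq, ev_norm_sq]
  simp only [dotProduct, Matrix.mulVec_diagonal]
  rw [Finset.mul_sum]
  apply Finset.sum_le_sum
  intro i _
  have := hd i
  have h1 : d i * v i * (d i * v i) = (d i)^2 * (v i * v i) := by ring
  have h2 : (d i)^2 ≤ c^2 := by nlinarith [abs_nonneg (d i), sq_abs (d i)]
  nlinarith [mul_self_nonneg (v i)]

lemma specNorm_diag_le {k : ℕ} {d : Fin k → ℝ} {c : ℝ} (hc : 0 ≤ c) (hd : ∀ i, |d i| ≤ c) :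
    ‖(Matrix.diagonal d : Matrix (Fin k) (Fin k) ℝ)‖ ≤ c :=
  specNorm_le_bound _ hc (ev_diag_le hc hd)

lemma ev_sym_idem_le {k : ℕ} {J : Matrix (Fin k) (Fin k) ℝ} (hsym : Jᵀ = J)
    (hidem : J * J = J) (v : Fin k → ℝ) : ‖ev (J *ᵥ v)‖ ≤ ‖ev v‖ := by
  have h : ‖ev (J *ᵥ v)‖ ^ 2 = ⟪ev v, ev (J *ᵥ v)⟫ := by
    rw [ev_mulVec_sq, hsym, hidem, ev_inner]
  have h2 := real_inner_le_norm (ev v) (ev (J *ᵥ v))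
  nlinarith [norm_nonneg (ev (J *ᵥ v)), norm_nonneg (ev v)]

lemma specNorm_sym_idem_le_one {k : ℕ} {J : Matrix (Fin k) (Fin k) ℝ} (hsym : Jᵀ = J)
    (hidem : J * J = J) : ‖J‖ ≤ 1 := by
  apply specNorm_le_bound _ zero_le_one
  intro v
  rw [one_mul]
  exact ev_sym_idem_le hsym hidem v

lemma specNorm_transpose {a b : ℕ} (A : Matrix (Fin a) (Fin b) ℝ) : ‖Aᵀ‖ = ‖A‖ := by
  have h : Aᵀ = Aᴴ := by
    ext i j
    simp [Matrix.conjTranspose_apply]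
  rw [h]
  exact Matrix.l2_opNorm_conjTranspose A

lemma submatrix_mulVec {a b r : ℕ} (A : Matrix (Fin a) (Fin b) ℝ) (s : Fin r → Fin a)
    (v : Fin b → ℝ) : (A.submatrix s id) *ᵥ v = fun k => (A *ᵥ v) (s k) := by
  ext k
  simp [Matrix.mulVec, Matrix.submatrix, dotProduct]

lemma ev_comp_inj_le {N r : ℕ} (s : Fin r → Fin N) (hs : Function.Injective s)
    (f : Fin N → ℝ) : ‖ev (fun k => f (s k))‖ ≤ ‖ev f‖ := by
  apply sq_le_imp (norm_nonneg _) _ (norm_nonneg _)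
  rw [ev_norm_sq, ev_norm_sq]
  simp only [dotProduct]
  have himg : ∑ k : Fin r, f (s k) * f (s k) = ∑ i ∈ Finset.univ.image s, f i * f i :=
    (Finset.sum_image (f := fun i => f i * f i) (g := s) (fun x _ y _ h => hs h)).symm
  rw [himg]
  apply Finset.sum_le_sum_of_subset_of_nonneg (Finset.subset_univ _)
  intro i _ _
  exact mul_self_nonneg (f i)

set_option maxHeartbeats 1000000 in
lemma master_aux {N r c : ℕ} (hr : 1 ≤ r) (V : Matrix (Fin N) (Fin r) ℝ)
    (V₂ : Matrix (Fin N) (Fin c) ℝ) (s : Fin r → Fin N) (hs : Function.Injective s)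
    (hV : Vᵀ * V = 1) (hVV₂ : Vᵀ * V₂ = 0)
    (hV₂ : ∀ x : Fin c → ℝ, ‖ev (V₂ *ᵥ x)‖ ≤ ‖ev x‖)
    (hVs : IsUnit (V.submatrix s id)) :
    ‖V₂ - V * (V.submatrix s id)⁻¹ * V₂.submatrix s id‖ ≤ ‖(V.submatrix s id)⁻¹‖ := by
  obtain ⟨Vs, hVsdef⟩ : ∃ Vs, Vs = V.submatrix s id := ⟨_, rfl⟩
  rw [← hVsdef] at hVs ⊢
  obtain ⟨η, hηdef⟩ : ∃ η, η = ‖Vs⁻¹‖ := ⟨_, rfl⟩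
  rw [← hηdef]
  have hVsdet : IsUnit Vs.det := (Matrix.isUnit_iff_isUnit_det _).mp hVs
  have hinv1 : Vs * Vs⁻¹ = 1 := Matrix.mul_nonsing_inv _ hVsdet
  have hinv2 : Vs⁻¹ * Vs = 1 := Matrix.nonsing_inv_mul _ hVsdet
  have hVsle : ∀ y : Fin r → ℝ, ‖ev (Vs *ᵥ y)‖ ≤ ‖ev y‖ := by
    intro y
    rw [hVsdef, submatrix_mulVec]
    calc ‖ev fun k => (V *ᵥ y) (s k)‖ ≤ ‖ev (V *ᵥ y)‖ := ev_comp_inj_le s hs _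
    _ = ‖ev y‖ := ev_isometry hV y
  have hη0 : 0 ≤ η := hηdef ▸ norm_nonneg _
  have hη1 : 1 ≤ η := by
    have hv₀ : (0:ℝ) < ‖ev (fun _ => (1:ℝ) : Fin r → ℝ)‖ := by
      have h1 := ev_norm_sq (fun _ => (1:ℝ) : Fin r → ℝ)
      have h2 : (fun _ => (1:ℝ) : Fin r → ℝ) ⬝ᵥ (fun _ => (1:ℝ)) = (r:ℝ) := by
        simp [dotProduct]
      have h3 : (1:ℝ) ≤ (r:ℝ) := by exact_mod_cast hr
      nlinarith [norm_nonneg (ev (fun _ => (1:ℝ) : Fin r → ℝ))]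
    have hchain : ‖ev (fun _ => (1:ℝ) : Fin r → ℝ)‖ ≤ η * ‖ev (fun _ => (1:ℝ) : Fin r → ℝ)‖ := by
      have h1 : (fun _ => (1:ℝ) : Fin r → ℝ) = (Vs⁻¹ * Vs) *ᵥ (fun _ => (1:ℝ)) := by
        rw [hinv2, Matrix.one_mulVec]
      calc ‖ev (fun _ => (1:ℝ) : Fin r → ℝ)‖
          = ‖ev (Vs⁻¹ *ᵥ (Vs *ᵥ (fun _ => (1:ℝ))))‖ := by
            conv_lhs => rw [h1, ← Matrix.mulVec_mulVec]
      _ ≤ ‖Vs⁻¹‖ * ‖ev (Vs *ᵥ (fun _ => (1:ℝ)))‖ := ev_mulVec_le _ _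
      _ ≤ η * ‖ev (fun _ => (1:ℝ) : Fin r → ℝ)‖ := by
            rw [← hηdef]
            exact mul_le_mul_of_nonneg_left (hVsle _) hη0
    nlinarith
  apply specNorm_le_bound _ hη0
  intro x
  obtain ⟨a, hadef⟩ : ∃ a, a = V₂ *ᵥ x := ⟨_, rfl⟩
  obtain ⟨u, hudef⟩ : ∃ u, u = Vs⁻¹ *ᵥ (V₂.submatrix s id *ᵥ x) := ⟨_, rfl⟩
  have hMx : (V₂ - V * Vs⁻¹ * V₂.submatrix s id) *ᵥ x = a - V *ᵥ u := by
    rw [Matrix.sub_mulVec, hadef, hudef, Matrix.mulVec_mulVec, Matrix.mulVec_mulVec,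
      Matrix.mul_assoc]
  have hVta : Vᵀ *ᵥ a = 0 := by
    rw [hadef, Matrix.mulVec_mulVec, hVV₂, Matrix.zero_mulVec]
  have haV : ∀ y : Fin r → ℝ, a ⬝ᵥ (V *ᵥ y) = 0 := by
    intro y
    rw [dot_shift, hVta, zero_dotProduct]
  have hVuVu : (V *ᵥ u) ⬝ᵥ (V *ᵥ u) = u ⬝ᵥ u := by
    have h1 := ev_mulVec_sq V u
    have h2 := ev_norm_sq (V *ᵥ u)
    rw [hV, Matrix.one_mulVec] at h1
    rw [← h2, h1]
  have hax : ‖ev a‖ ≤ ‖ev x‖ := hadef ▸ hV₂ x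
  have huu : 0 ≤ u ⬝ᵥ u := by rw [← ev_norm_sq]; positivity
  have hu : u ⬝ᵥ u ≤ (η^2 - 1) * ‖ev x‖^2 := by
    rcases eq_or_ne (u ⬝ᵥ u) 0 with huz | huz
    · rw [huz]
      exact mul_nonneg (by nlinarith) (sq_nonneg _)
    · have hupos : 0 < u ⬝ᵥ u := lt_of_le_of_ne huu (Ne.symm huz)
      obtain ⟨w, hwdef⟩ : ∃ w, w = (Vs⁻¹)ᵀ *ᵥ u := ⟨_, rfl⟩
      have hwu : Vsᵀ *ᵥ w = u := by
        rw [hwdef, Matrix.mulVec_mulVec, ← Matrix.transpose_mul, hinv2,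
          Matrix.transpose_one, Matrix.one_mulVec]
      obtain ⟨sw, hswdef⟩ : ∃ sw : Fin N → ℝ,
          sw = fun i => ∑ k, if s k = i then w k else 0 := ⟨_, rfl⟩
      have hswdot : ∀ f : Fin N → ℝ, sw ⬝ᵥ f = ∑ k, w k * f (s k) := by
        intro f
        rw [hswdef]
        simp only [dotProduct, Finset.sum_mul]
        rw [Finset.sum_comm]
        apply Finset.sum_congr rfl
        intro k _
        simp [ite_mul]
      have hswk : ∀ k, sw (s k) = w k := by
        intro k
        rw [hswdef]
        simp [hs.eq_iff]
      have hswsw : sw ⬝ᵥ sw = w ⬝ᵥ w := by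
        rw [hswdot]
        simp only [hswk]
        rfl
      have hVtsw : Vᵀ *ᵥ sw = u := by
        funext j
        have h1 : (Vᵀ *ᵥ sw) j = sw ⬝ᵥ (fun i => V i j) := by
          simp [Matrix.mulVec, dotProduct, Matrix.transpose_apply, mul_comm]
        have h2 : (Vsᵀ *ᵥ w) j = ∑ k, w k * V (s k) j := by
          simp [Matrix.mulVec, dotProduct, Matrix.transpose_apply, hVsdef, mul_comm]
        rw [h1, hswdot, ← hwu, h2]
      have hVsu : Vs *ᵥ u = fun k => a (s k) := by
        rw [hudef, Matrix.mulVec_mulVec, hinv1, Matrix.one_mulVec, submatrix_mulVec, hadef]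
      have key1 : u ⬝ᵥ u = (sw - V *ᵥ u) ⬝ᵥ a := by
        have h1 : w ⬝ᵥ (Vs *ᵥ u) = u ⬝ᵥ u := by
          rw [dot_shift, hwu]
        have h2 : w ⬝ᵥ (fun k => a (s k)) = sw ⬝ᵥ a := (hswdot a).symm
        have h3 : (V *ᵥ u) ⬝ᵥ a = 0 := by
          rw [dotProduct_comm]; exact haV u
        rw [← h1, hVsu, h2, sub_dotProduct, h3, sub_zero]
      have key2 : (sw - V *ᵥ u) ⬝ᵥ (sw - V *ᵥ u) = w ⬝ᵥ w - u ⬝ᵥ u := by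
        have h1 : sw ⬝ᵥ (V *ᵥ u) = u ⬝ᵥ u := by
          rw [dot_shift, hVtsw]
        have h2 : (V *ᵥ u) ⬝ᵥ sw = u ⬝ᵥ u := by
          rw [dotProduct_comm]; exact h1
        simp only [sub_dotProduct, dotProduct_sub]
        rw [h1, h2, hVuVu, hswsw]
        ring
      have hw2 : w ⬝ᵥ w ≤ η^2 * (u ⬝ᵥ u) := by
        have h1 : ‖ev w‖ ≤ η * ‖ev u‖ := by
          have h0 := ev_mulVec_le (Vs⁻¹)ᵀ u
          rw [specNorm_transpose, ← hηdef, ← hwdef] at h0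
          exact h0
        have h2 := ev_norm_sq w
        have h3 := ev_norm_sq u
        nlinarith [norm_nonneg (ev w), norm_nonneg (ev u)]
      have hcs : u ⬝ᵥ u ≤ ‖ev (sw - V *ᵥ u)‖ * ‖ev a‖ := by
        rw [key1, ← ev_inner]
        exact real_inner_le_norm _ _
      have hn2 : ‖ev (sw - V *ᵥ u)‖^2 = w ⬝ᵥ w - u ⬝ᵥ u := by
        rw [ev_norm_sq, key2]
      have hfin : (u ⬝ᵥ u)^2 ≤ (η^2 - 1) * (u ⬝ᵥ u) * ‖ev x‖^2 := by
        have h4 : (u ⬝ᵥ u)^2 ≤ ‖ev (sw - V *ᵥ u)‖^2 * ‖ev a‖^2 := by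
          nlinarith [norm_nonneg (ev (sw - V *ᵥ u)), norm_nonneg (ev a)]
        have h5 : ‖ev a‖^2 ≤ ‖ev x‖^2 := by
          nlinarith [norm_nonneg (ev a), norm_nonneg (ev x)]
        have h6 : ‖ev (sw - V *ᵥ u)‖^2 ≤ (η^2 - 1) * (u ⬝ᵥ u) := by
          rw [hn2]; nlinarith
        nlinarith [sq_nonneg ‖ev (sw - V *ᵥ u)‖, sq_nonneg ‖ev x‖,
          mul_nonneg (mul_nonneg (norm_nonneg (ev (sw - V *ᵥ u))) (norm_nonneg (ev x)))
            (norm_nonneg (ev x))]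
      nlinarith [sq_nonneg ‖ev x‖]
  rw [hMx]
  apply sq_le_imp (by positivity) _ (norm_nonneg _)
  have hexp : ‖ev (a - V *ᵥ u)‖^2 = a ⬝ᵥ a + u ⬝ᵥ u := by
    rw [ev_norm_sq]
    simp only [sub_dotProduct, dotProduct_sub]
    have h1 : a ⬝ᵥ (V *ᵥ u) = 0 := haV u
    have h2 : (V *ᵥ u) ⬝ᵥ a = 0 := by rw [dotProduct_comm]; exact haV u
    rw [h1, h2, hVuVu]
    ring
  rw [hexp, mul_pow]
  have ha2 : a ⬝ᵥ a ≤ ‖ev x‖^2 := by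
    rw [← ev_norm_sq]
    nlinarith [norm_nonneg (ev a), norm_nonneg (ev x)]
  nlinarith [sq_nonneg ‖ev x‖]

/-- cross-size diagonal-like matrix -/
def cdiag {a b : ℕ} (g : ℕ → ℝ) : Matrix (Fin a) (Fin b) ℝ :=
  Matrix.of fun i j => if (i:ℕ) = (j:ℕ) then g (j:ℕ) else 0

lemma sum_ite_val {b : ℕ} (f : Fin b → ℝ) (t : ℕ) :
    ∑ l : Fin b, (if (l:ℕ) = t then f l else 0) =
      if h : t < b then f ⟨t, h⟩ else 0 := by
  split
  · next h =>
    rw [Finset.sum_eq_single (⟨t, h⟩ : Fin b)]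
    · simp
    · intro l _ hl
      have : (l:ℕ) ≠ t := fun hc => hl (Fin.ext hc)
      simp [this]
    · simp
  · next h =>
    apply Finset.sum_eq_zero
    intro l _
    have : (l:ℕ) ≠ t := by omega
    simp [this]

lemma cdiag_transpose {a b : ℕ} (g : ℕ → ℝ) :
    (cdiag g : Matrix (Fin a) (Fin b) ℝ)ᵀ = (cdiag g : Matrix (Fin b) (Fin a) ℝ) := by
  ext i j
  simp only [cdiag, Matrix.transpose_apply, Matrix.of_apply]
  by_cases h : (i:ℕ) = (j:ℕ)
  · simp [h]
  · have h' : ¬ (j:ℕ) = (i:ℕ) := fun hc => h hc.symm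
    simp [h, h']

lemma cdiag_congr {a b : ℕ} {g g' : ℕ → ℝ} (h : ∀ t, t < a → t < b → g t = g' t) :
    (cdiag g : Matrix (Fin a) (Fin b) ℝ) = cdiag g' := by
  ext i j
  simp only [cdiag, Matrix.of_apply]
  by_cases hij : (i:ℕ) = (j:ℕ)
  · simp [hij, h (j:ℕ) (hij ▸ i.isLt) j.isLt]
  · simp [hij]

lemma cdiag_mul_cdiag {a b c : ℕ} (g h : ℕ → ℝ) :
    (cdiag g : Matrix (Fin a) (Fin b) ℝ) * (cdiag h : Matrix (Fin b) (Fin c) ℝ) =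
      (cdiag (fun t => if t < b then g t * h t else 0) : Matrix (Fin a) (Fin c) ℝ) := by
  ext i j
  rw [Matrix.mul_apply]
  have hterm : ∀ k : Fin b, (cdiag g : Matrix (Fin a) (Fin b) ℝ) i k *
      (cdiag h : Matrix (Fin b) (Fin c) ℝ) k j =
      (if (k:ℕ) = (i:ℕ) then (g (k:ℕ) * (if (k:ℕ) = (j:ℕ) then h (j:ℕ) else 0)) else 0) := by
    intro k
    simp only [cdiag, Matrix.of_apply]
    by_cases h1 : (i:ℕ) = (k:ℕ)
    · simp [h1]
    · have h1' : ¬ (k:ℕ) = (i:ℕ) := fun hc => h1 hc.symm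
      simp [h1, h1']
  simp only [hterm]
  rw [sum_ite_val (fun k => g (k:ℕ) * (if (k:ℕ) = (j:ℕ) then h (j:ℕ) else 0)) (i:ℕ)]
  simp only [cdiag, Matrix.of_apply]
  by_cases hij : (i:ℕ) = (j:ℕ)
  · by_cases hib : (i:ℕ) < b
    · have hjb : (j:ℕ) < b := hij ▸ hib
      rw [dif_pos hib, if_pos hij, if_pos hjb, if_pos hij, hij]
    · have hjb : ¬ (j:ℕ) < b := hij ▸ hib
      rw [dif_neg hib, if_pos hij, if_neg hjb]
  · by_cases hib : (i:ℕ) < b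
    · rw [dif_pos hib, if_neg hij, if_neg hij, mul_zero]
    · rw [dif_neg hib, if_neg hij]

lemma cdiag_diagonal {k : ℕ} (g : ℕ → ℝ) :
    (cdiag g : Matrix (Fin k) (Fin k) ℝ) = Matrix.diagonal (fun i : Fin k => g (i:ℕ)) := by
  ext i j
  simp only [cdiag, Matrix.of_apply, Matrix.diagonal_apply]
  by_cases h : (i:ℕ) = (j:ℕ)
  · have h2 : i = j := Fin.ext h
    simp [h, h2]
  · have h2 : i ≠ j := fun hc => h (congrArg Fin.val hc)
    simp [h, h2]

lemma cdiag_one {k : ℕ} {g : ℕ → ℝ} (h : ∀ t, t < k → g t = 1) :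
    (cdiag g : Matrix (Fin k) (Fin k) ℝ) = 1 := by
  rw [cdiag_diagonal]
  have h2 : (fun i : Fin k => g (i:ℕ)) = fun _ => (1:ℝ) := funext fun i => h _ i.isLt
  rw [h2, Matrix.diagonal_one]

lemma cdiag_zero {a b : ℕ} {g : ℕ → ℝ} (h : ∀ t, t < a → t < b → g t = 0) :
    (cdiag g : Matrix (Fin a) (Fin b) ℝ) = 0 := by
  ext i j
  simp only [cdiag, Matrix.of_apply, Matrix.zero_apply]
  by_cases hij : (i:ℕ) = (j:ℕ)
  · simp [hij, h (j:ℕ) (hij ▸ i.isLt) j.isLt]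
  · simp [hij]

lemma cdiag_add {a b : ℕ} (g g' : ℕ → ℝ) :
    (cdiag g : Matrix (Fin a) (Fin b) ℝ) + cdiag g' = cdiag (fun t => g t + g' t) := by
  ext i j
  simp only [cdiag, Matrix.of_apply, Matrix.add_apply]
  by_cases hij : (i:ℕ) = (j:ℕ) <;> simp [hij]

lemma mul_cdiag_one {a b r' : ℕ} (h : r' ≤ b) (A : Matrix (Fin a) (Fin b) ℝ) :
    A * (cdiag 1 : Matrix (Fin b) (Fin r') ℝ) = A.submatrix id (Fin.castLE h) := by
  ext i k
  rw [Matrix.mul_apply]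
  have hterm : ∀ l : Fin b, A i l * (cdiag 1 : Matrix (Fin b) (Fin r') ℝ) l k =
      (if (l:ℕ) = (k:ℕ) then A i l else 0) := by
    intro l
    simp only [cdiag, Matrix.of_apply, Pi.one_apply]
    by_cases h1 : (l:ℕ) = (k:ℕ) <;> simp [h1]
  simp only [hterm]
  rw [sum_ite_val (fun l => A i l) (k:ℕ)]
  have hk : (k:ℕ) < b := lt_of_lt_of_le k.isLt h
  simp only [hk, dif_pos]
  rfl

lemma dot_diag_le {k : ℕ} {d : Fin k → ℝ} {c2 : ℝ} (hd : ∀ i, d i ≤ c2) (hd0 : ∀ i, 0 ≤ d i)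
    (x : Fin k → ℝ) : x ⬝ᵥ (Matrix.diagonal d *ᵥ x) ≤ c2 * (x ⬝ᵥ x) := by
  simp only [dotProduct, Matrix.mulVec_diagonal, Finset.mul_sum]
  apply Finset.sum_le_sum
  intro i _
  have h1 := hd i
  have h2 := hd0 i
  nlinarith [mul_self_nonneg (x i)]

lemma ev_cdiag_le {a b : ℕ} {g : ℕ → ℝ} {cbd : ℝ} (hcbd : 0 ≤ cbd) (h : ∀ t, |g t| ≤ cbd)
    (x : Fin b → ℝ) : ‖ev ((cdiag g : Matrix (Fin a) (Fin b) ℝ) *ᵥ x)‖ ≤ cbd * ‖ev x‖ := by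
  apply sq_le_imp (by positivity) _ (norm_nonneg _)
  rw [mul_pow, ev_mulVec_sq, cdiag_transpose, cdiag_mul_cdiag, cdiag_diagonal, ev_norm_sq]
  have hle := dot_diag_le (d := fun j : Fin b => if (j:ℕ) < a then g (j:ℕ) * g (j:ℕ) else 0)
    (c2 := cbd^2) ?_ ?_ x
  · exact hle
  · intro i
    by_cases hi : (i:ℕ) < a
    · simp only [hi, if_pos]
      have := h (i:ℕ)
      nlinarith [abs_nonneg (g (i:ℕ)), sq_abs (g (i:ℕ))]
    · simp [hi]
      positivity
  · intro i
    by_cases hi : (i:ℕ) < a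
    · simp only [hi, if_pos]
      nlinarith [mul_self_nonneg (g (i:ℕ))]
    · simp [hi]

lemma specNorm_cdiag_le {a b : ℕ} {g : ℕ → ℝ} {cbd : ℝ} (hcbd : 0 ≤ cbd)
    (h : ∀ t, |g t| ≤ cbd) : ‖(cdiag g : Matrix (Fin a) (Fin b) ℝ)‖ ≤ cbd :=
  specNorm_le_bound _ hcbd (ev_cdiag_le hcbd h)

lemma selector_mul {a b r' : ℕ} (p : Fin r' → Fin a) (A : Matrix (Fin a) (Fin b) ℝ) :
    (Matrix.of fun (k : Fin r') (i : Fin a) => if p k = i then (1:ℝ) else 0) * A =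
      A.submatrix p id := by
  ext k j
  rw [Matrix.mul_apply]
  have hterm : ∀ i, (if p k = i then (1:ℝ) else 0) * A i j =
      (if i = p k then A i j else 0) := by
    intro i
    by_cases h1 : p k = i
    · simp [h1]
    · have h1' : i ≠ p k := fun hc => h1 hc.symm
      simp [h1, h1']
  simp only [Matrix.of_apply, hterm]
  rw [Finset.sum_ite_eq' Finset.univ (p k) (fun i => A i j)]
  simp

lemma mul_selector {a b r' : ℕ} (A : Matrix (Fin a) (Fin b) ℝ) (q : Fin r' → Fin b) :
    A * (Matrix.of fun (j : Fin b) (k : Fin r') => if q k = j then (1:ℝ) else 0) =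
      A.submatrix id q := by
  ext i k
  rw [Matrix.mul_apply]
  have hterm : ∀ j, A i j * (if q k = j then (1:ℝ) else 0) =
      (if j = q k then A i j else 0) := by
    intro j
    by_cases h1 : q k = j
    · simp [h1]
    · have h1' : j ≠ q k := fun hc => h1 hc.symm
      simp [h1, h1']
  simp only [Matrix.of_apply, hterm]
  rw [Finset.sum_ite_eq' Finset.univ (q k) (fun j => A i j)]
  simp

lemma specNorm_mul3_le {a b c d : ℕ} (A : Matrix (Fin a) (Fin b) ℝ)
    (B : Matrix (Fin b) (Fin c) ℝ) (C : Matrix (Fin c) (Fin d) ℝ) :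
    ‖A * B * C‖ ≤ ‖A‖ * ‖B‖ * ‖C‖ :=
  le_trans (Matrix.l2_opNorm_mul _ _)
    (mul_le_mul_of_nonneg_right (Matrix.l2_opNorm_mul _ _) (norm_nonneg _))


def sigH (σ : ℕ → ℝ) (r : ℕ) : ℕ → ℝ := fun t => if t < r then σ t else 0
def sigT (σ : ℕ → ℝ) (r : ℕ) : ℕ → ℝ := fun t => if r ≤ t then σ t else 0
def kap (r : ℕ) : ℕ → ℝ := fun t => if r ≤ t then (1:ℝ) else 0


set_option maxHeartbeats 1000000 in
/-- **DEIM-CUR error bound.**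
Let `W` be a real `m×n` matrix with singular value decomposition
`W = Pfull · Σ · Qfullᵀ`, where `Pfull` and `Qfull` are orthogonal, `Σ` is the
rectangular diagonal matrix with diagonal entries `σ 0 ≥ σ 1 ≥ ⋯ ≥ 0` (the
singular values of `W` in decreasing order), and let `1 ≤ r < min(m,n)`.
Let `P` (resp. `Q`) consist of the leading `r` columns of `Pfull` (resp.
`Qfull`), i.e. the leading `r` left (resp. right) singular vectors of `W`.
Let `p` be a list of `r` distinct row indices and `q` a list of `r` distinct
column indices such that the `r×r` submatrices `P[p,:]` and `Q[q,:]` are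
invertible.  Set `C = W[:,q]`, `R = W[p,:]` and `U = C† W R†` (`†` the
Moore–Penrose pseudoinverse).  Then
`‖W − C U R‖₂ ≤ (η_p + η_q)·σ_{r+1}` with `η_p = ‖(P[p,:])⁻¹‖₂` and
`η_q = ‖(Q[q,:])⁻¹‖₂`, where `σ_{r+1}` is the `(r+1)`-st largest singular
value of `W` (index `r` with 0-based indexing). -/
theorem deim_cur_error_bound {m n r : ℕ} (hr1 : 1 ≤ r) (hrm : r < m) (hrn : r < n)
    (W : Matrix (Fin m) (Fin n) ℝ)
    (Pfull : Matrix (Fin m) (Fin m) ℝ) (Qfull : Matrix (Fin n) (Fin n) ℝ)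
    (σ : ℕ → ℝ)
    (hPorth : Pfullᵀ * Pfull = 1) (hQorth : Qfullᵀ * Qfull = 1)
    (hσ0 : ∀ i, 0 ≤ σ i) (hσmono : ∀ i j : ℕ, i ≤ j → σ j ≤ σ i)
    (hSVD : W = Pfull * (Matrix.of fun (i : Fin m) (j : Fin n) =>
        if (i : ℕ) = (j : ℕ) then σ (i : ℕ) else 0) * Qfullᵀ)
    (P : Matrix (Fin m) (Fin r) ℝ) (Q : Matrix (Fin n) (Fin r) ℝ)
    (hP : P = Matrix.of fun i k => Pfull i (Fin.castLE hrm.le k))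
    (hQ : Q = Matrix.of fun j k => Qfull j (Fin.castLE hrn.le k))
    (p : Fin r → Fin m) (q : Fin r → Fin n)
    (hp : Function.Injective p) (hq : Function.Injective q)
    (hPp : IsUnit (P.submatrix p id)) (hQq : IsUnit (Q.submatrix q id))
    (C : Matrix (Fin m) (Fin r) ℝ) (R : Matrix (Fin r) (Fin n) ℝ)
    (hC : C = W.submatrix id q) (hR : R = W.submatrix p id)
    (Cd : Matrix (Fin r) (Fin m) ℝ) (Rd : Matrix (Fin n) (Fin r) ℝ)
    (hCd : IsMoorePenrose C Cd) (hRd : IsMoorePenrose R Rd)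
    (U : Matrix (Fin r) (Fin r) ℝ) (hU : U = Cd * W * Rd) :
    specNorm (W - C * U * R) ≤
      (specNorm ((P.submatrix p id)⁻¹) + specNorm ((Q.submatrix q id)⁻¹)) * σ r := by
  simp only [specNorm_eq]
  -- basic facts
  have hQfull2 : Qfull * Qfullᵀ = 1 := mul_eq_one_comm.mp hQorth
  have hPfull2 : Pfull * Pfullᵀ = 1 := mul_eq_one_comm.mp hPorth
  have hσr0 : (0:ℝ) ≤ σ r := hσ0 r
  have hQqdet : IsUnit (Q.submatrix q id).det := (Matrix.isUnit_iff_isUnit_det _).mp hQq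
  have hPpdet : IsUnit (P.submatrix p id).det := (Matrix.isUnit_iff_isUnit_det _).mp hPp
  have hPpinv : (P.submatrix p id)⁻¹ * (P.submatrix p id) = 1 :=
    Matrix.nonsing_inv_mul _ hPpdet
  have hQqTdet : IsUnit ((Q.submatrix q id)ᵀ).det := by
    rw [Matrix.det_transpose]; exact hQqdet
  have hQqTinv : (Q.submatrix q id)ᵀ * ((Q.submatrix q id)ᵀ)⁻¹ = 1 :=
    Matrix.mul_nonsing_inv _ hQqTdet
  have hQqTinv_eq : ((Q.submatrix q id)ᵀ)⁻¹ = ((Q.submatrix q id)⁻¹)ᵀ :=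
    (Matrix.transpose_nonsing_inv _).symm
  -- leading column identities
  have hQJ : Q = Qfull * (cdiag 1 : Matrix (Fin n) (Fin r) ℝ) := by
    rw [mul_cdiag_one hrn.le, hQ]
    ext j k
    simp [Matrix.submatrix_apply]
  have hPJ : P = Pfull * (cdiag 1 : Matrix (Fin m) (Fin r) ℝ) := by
    rw [mul_cdiag_one hrm.le, hP]
    ext i k
    simp [Matrix.submatrix_apply]
  have hQev : Qᵀ = (cdiag 1 : Matrix (Fin r) (Fin n) ℝ) * Qfullᵀ := by
    rw [hQJ, Matrix.transpose_mul, cdiag_transpose]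
  have hPev : Pᵀ = (cdiag 1 : Matrix (Fin r) (Fin m) ℝ) * Pfullᵀ := by
    rw [hPJ, Matrix.transpose_mul, cdiag_transpose]
  have hQ1 : Qᵀ * Q = 1 := by
    rw [hQev, hQJ, Matrix.mul_assoc, ← Matrix.mul_assoc Qfullᵀ, hQorth, Matrix.one_mul,
      cdiag_mul_cdiag]
    apply cdiag_one
    intro t ht
    simp [lt_trans ht hrn]
  have hP1 : Pᵀ * P = 1 := by
    rw [hPev, hPJ, Matrix.mul_assoc, ← Matrix.mul_assoc Pfullᵀ, hPorth, Matrix.one_mul,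
      cdiag_mul_cdiag]
    apply cdiag_one
    intro t ht
    simp [lt_trans ht hrm]
  have hQV2 : Qᵀ * (Qfull * (cdiag (kap r) : Matrix (Fin n) (Fin n) ℝ)) = 0 := by
    rw [hQev, Matrix.mul_assoc, ← Matrix.mul_assoc Qfullᵀ, hQorth, Matrix.one_mul,
      cdiag_mul_cdiag]
    apply cdiag_zero
    intro t ht htn
    simp [kap, htn, not_le.mpr ht]
  have hPV2 : Pᵀ * (Pfull * (cdiag (kap r) : Matrix (Fin m) (Fin m) ℝ)) = 0 := by
    rw [hPev, Matrix.mul_assoc, ← Matrix.mul_assoc Pfullᵀ, hPorth, Matrix.one_mul,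
      cdiag_mul_cdiag]
    apply cdiag_zero
    intro t ht htm
    simp [kap, htm, not_le.mpr ht]
  have hkapbd : ∀ t, |kap r t| ≤ (1:ℝ) := by
    intro t
    unfold kap
    split <;> simp
  have hnormV2q : ∀ x : Fin n → ℝ,
      ‖ev ((Qfull * (cdiag (kap r) : Matrix (Fin n) (Fin n) ℝ)) *ᵥ x)‖ ≤ ‖ev x‖ := by
    intro x
    rw [← Matrix.mulVec_mulVec]
    calc ‖ev (Qfull *ᵥ ((cdiag (kap r) : Matrix (Fin n) (Fin n) ℝ) *ᵥ x))‖
        = ‖ev ((cdiag (kap r) : Matrix (Fin n) (Fin n) ℝ) *ᵥ x)‖ := ev_isometry hQorth _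
    _ ≤ 1 * ‖ev x‖ := ev_cdiag_le zero_le_one hkapbd x
    _ = ‖ev x‖ := one_mul _
  have hnormV2p : ∀ x : Fin m → ℝ,
      ‖ev ((Pfull * (cdiag (kap r) : Matrix (Fin m) (Fin m) ℝ)) *ᵥ x)‖ ≤ ‖ev x‖ := by
    intro x
    rw [← Matrix.mulVec_mulVec]
    calc ‖ev (Pfull *ᵥ ((cdiag (kap r) : Matrix (Fin m) (Fin m) ℝ) *ᵥ x))‖
        = ‖ev ((cdiag (kap r) : Matrix (Fin m) (Fin m) ℝ) *ᵥ x)‖ := ev_isometry hPorth _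
    _ ≤ 1 * ‖ev x‖ := ev_cdiag_le zero_le_one hkapbd x
    _ = ‖ev x‖ := one_mul _
  -- master lemma applications
  have hMQ := master_aux hr1 Q (Qfull * (cdiag (kap r) : Matrix (Fin n) (Fin n) ℝ)) q hq
    hQ1 hQV2 hnormV2q hQq
  have hMP := master_aux hr1 P (Pfull * (cdiag (kap r) : Matrix (Fin m) (Fin m) ℝ)) p hp
    hP1 hPV2 hnormV2p hPp
  -- sigma decomposition
  have hSc : (Matrix.of fun (i : Fin m) (j : Fin n) =>
      if (i : ℕ) = (j : ℕ) then σ (i : ℕ) else 0) = (cdiag σ : Matrix (Fin m) (Fin n) ℝ) := by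
    ext i j
    simp only [cdiag, Matrix.of_apply]
    by_cases h : (i:ℕ) = (j:ℕ)
    · simp [h]
    · simp [h]
  have hsplitsig : (cdiag σ : Matrix (Fin m) (Fin n) ℝ) =
      cdiag (sigH σ r) + cdiag (sigT σ r) := by
    rw [cdiag_add]
    apply cdiag_congr
    intro t _ _
    unfold sigH sigT
    by_cases h : t < r
    · simp [h, not_le.mpr h]
    · simp [h, not_lt.mp h]
  have hW : W = Pfull * ((cdiag (sigH σ r) : Matrix (Fin m) (Fin n) ℝ) * Qfullᵀ) +
      Pfull * ((cdiag (sigT σ r) : Matrix (Fin m) (Fin n) ℝ) * Qfullᵀ) := by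
    rw [hSVD, hSc, hsplitsig, Matrix.mul_add, Matrix.add_mul]
    simp only [Matrix.mul_assoc]
  -- head factorizations
  have e1q : (cdiag (sigH σ r) : Matrix (Fin m) (Fin n) ℝ) =
      (cdiag σ : Matrix (Fin m) (Fin r) ℝ) * (cdiag 1 : Matrix (Fin r) (Fin n) ℝ) := by
    rw [cdiag_mul_cdiag]
    apply cdiag_congr
    intro t _ _
    unfold sigH
    by_cases h : t < r <;> simp [h]
  have e1p : (cdiag (sigH σ r) : Matrix (Fin m) (Fin n) ℝ) =
      (cdiag 1 : Matrix (Fin m) (Fin r) ℝ) * (cdiag σ : Matrix (Fin r) (Fin n) ℝ) := by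
    rw [cdiag_mul_cdiag]
    apply cdiag_congr
    intro t _ _
    unfold sigH
    by_cases h : t < r <;> simp [h]
  -- tail factorizations
  have e3q : (cdiag (sigT σ r) : Matrix (Fin m) (Fin n) ℝ) *
      (cdiag (kap r) : Matrix (Fin n) (Fin n) ℝ) = cdiag (sigT σ r) := by
    rw [cdiag_mul_cdiag]
    apply cdiag_congr
    intro t _ htn
    unfold sigT kap
    by_cases h : r ≤ t <;> simp [h, htn]
  have e3p : (cdiag (kap r) : Matrix (Fin m) (Fin m) ℝ) *
      (cdiag (sigT σ r) : Matrix (Fin m) (Fin n) ℝ) = cdiag (sigT σ r) := by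
    rw [cdiag_mul_cdiag]
    apply cdiag_congr
    intro t htm _
    unfold sigT kap
    by_cases h : r ≤ t <;> simp [h, htm]
  have hStb : ‖(cdiag (sigT σ r) : Matrix (Fin m) (Fin n) ℝ)‖ ≤ σ r := by
    apply specNorm_cdiag_le hσr0
    intro t
    unfold sigT
    split
    · next h => rw [abs_of_nonneg (hσ0 t)]; exact hσmono r t h
    · simpa using hσr0
  -- selector matrices
  have hWSq : W * (Matrix.of fun (j : Fin n) (k : Fin r) => if q k = j then (1:ℝ) else 0) = C := by
    rw [mul_selector]; exact hC.symm
  have hQtSq : Qᵀ * (Matrix.of fun (j : Fin n) (k : Fin r) => if q k = j then (1:ℝ) else 0) =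
      (Q.submatrix q id)ᵀ := by
    rw [mul_selector]; exact (Matrix.transpose_submatrix _ _ _).symm
  have hV2qSq : (Qfull * (cdiag (kap r) : Matrix (Fin n) (Fin n) ℝ))ᵀ *
      (Matrix.of fun (j : Fin n) (k : Fin r) => if q k = j then (1:ℝ) else 0) =
      ((Qfull * (cdiag (kap r) : Matrix (Fin n) (Fin n) ℝ)).submatrix q id)ᵀ := by
    rw [mul_selector]; exact (Matrix.transpose_submatrix _ _ _).symm
  have hTpW : (Matrix.of fun (k : Fin r) (i : Fin m) => if p k = i then (1:ℝ) else 0) * W = R := by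
    rw [selector_mul]; exact hR.symm
  have hTpP : (Matrix.of fun (k : Fin r) (i : Fin m) => if p k = i then (1:ℝ) else 0) * P =
      P.submatrix p id := selector_mul p P
  have hTpV2p : (Matrix.of fun (k : Fin r) (i : Fin m) => if p k = i then (1:ℝ) else 0) *
      (Pfull * (cdiag (kap r) : Matrix (Fin m) (Fin m) ℝ)) =
      (Pfull * (cdiag (kap r) : Matrix (Fin m) (Fin m) ℝ)).submatrix p id := selector_mul p _
  -- the oblique projector on the right
  have hQX : Qᵀ * ((Matrix.of fun (j : Fin n) (k : Fin r) => if q k = j then (1:ℝ) else 0) *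
      (((Q.submatrix q id)ᵀ)⁻¹ * Qᵀ)) = Qᵀ := by
    rw [← Matrix.mul_assoc, hQtSq, ← Matrix.mul_assoc, hQqTinv, Matrix.one_mul]
  -- core identity, Q side
  have hHead : (Pfull * ((cdiag (sigH σ r) : Matrix (Fin m) (Fin n) ℝ) * Qfullᵀ)) *
      ((Matrix.of fun (j : Fin n) (k : Fin r) => if q k = j then (1:ℝ) else 0) *
        (((Q.submatrix q id)ᵀ)⁻¹ * Qᵀ)) =
      Pfull * ((cdiag (sigH σ r) : Matrix (Fin m) (Fin n) ℝ) * Qfullᵀ) := by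
    have hh : (cdiag (sigH σ r) : Matrix (Fin m) (Fin n) ℝ) * Qfullᵀ =
        (cdiag σ : Matrix (Fin m) (Fin r) ℝ) * Qᵀ := by
      rw [e1q, hQev, Matrix.mul_assoc]
    rw [hh]
    simp only [Matrix.mul_assoc]
    rw [hQX]
  have hTailEq : (cdiag (sigT σ r) : Matrix (Fin m) (Fin n) ℝ) * Qfullᵀ =
      (cdiag (sigT σ r) : Matrix (Fin m) (Fin n) ℝ) *
        (Qfull * (cdiag (kap r) : Matrix (Fin n) (Fin n) ℝ))ᵀ := by
    rw [Matrix.transpose_mul, cdiag_transpose, ← Matrix.mul_assoc, e3q]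
  have hMT : (Qfull * (cdiag (kap r) : Matrix (Fin n) (Fin n) ℝ))ᵀ -
      (Qfull * (cdiag (kap r) : Matrix (Fin n) (Fin n) ℝ))ᵀ *
      ((Matrix.of fun (j : Fin n) (k : Fin r) => if q k = j then (1:ℝ) else 0) *
        (((Q.submatrix q id)ᵀ)⁻¹ * Qᵀ)) =
      (Qfull * (cdiag (kap r) : Matrix (Fin n) (Fin n) ℝ) - Q * (Q.submatrix q id)⁻¹ *
        (Qfull * (cdiag (kap r) : Matrix (Fin n) (Fin n) ℝ)).submatrix q id)ᵀ := by
    rw [Matrix.transpose_sub]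
    congr 1
    rw [← Matrix.mul_assoc, hV2qSq, Matrix.transpose_mul, Matrix.transpose_mul,
      hQqTinv_eq]
  have hcoreQ : W - W * ((Matrix.of fun (j : Fin n) (k : Fin r) => if q k = j then (1:ℝ) else 0) *
      (((Q.submatrix q id)ᵀ)⁻¹ * Qᵀ)) =
      Pfull * ((cdiag (sigT σ r) : Matrix (Fin m) (Fin n) ℝ) *
        (Qfull * (cdiag (kap r) : Matrix (Fin n) (Fin n) ℝ) - Q * (Q.submatrix q id)⁻¹ *
          (Qfull * (cdiag (kap r) : Matrix (Fin n) (Fin n) ℝ)).submatrix q id)ᵀ) := by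
    calc W - W * ((Matrix.of fun (j : Fin n) (k : Fin r) => if q k = j then (1:ℝ) else 0) *
        (((Q.submatrix q id)ᵀ)⁻¹ * Qᵀ)) =
        Pfull * ((cdiag (sigT σ r) : Matrix (Fin m) (Fin n) ℝ) * Qfullᵀ) -
          (Pfull * ((cdiag (sigT σ r) : Matrix (Fin m) (Fin n) ℝ) * Qfullᵀ)) *
          ((Matrix.of fun (j : Fin n) (k : Fin r) => if q k = j then (1:ℝ) else 0) *
            (((Q.submatrix q id)ᵀ)⁻¹ * Qᵀ)) := by
          conv_lhs => rw [hW]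
          rw [Matrix.add_mul, hHead]
          abel
    _ = Pfull * ((cdiag (sigT σ r) : Matrix (Fin m) (Fin n) ℝ) *
        ((Qfull * (cdiag (kap r) : Matrix (Fin n) (Fin n) ℝ))ᵀ -
          (Qfull * (cdiag (kap r) : Matrix (Fin n) (Fin n) ℝ))ᵀ *
          ((Matrix.of fun (j : Fin n) (k : Fin r) => if q k = j then (1:ℝ) else 0) *
            (((Q.submatrix q id)ᵀ)⁻¹ * Qᵀ)))) := by
          rw [hTailEq, Matrix.mul_sub (cdiag (sigT σ r)), Matrix.mul_sub Pfull]
          simp only [Matrix.mul_assoc]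
    _ = Pfull * ((cdiag (sigT σ r) : Matrix (Fin m) (Fin n) ℝ) *
        (Qfull * (cdiag (kap r) : Matrix (Fin n) (Fin n) ℝ) - Q * (Q.submatrix q id)⁻¹ *
          (Qfull * (cdiag (kap r) : Matrix (Fin n) (Fin n) ℝ)).submatrix q id)ᵀ) := by
          rw [hMT]
  -- core identity, P side
  have hHeadP : (P * ((P.submatrix p id)⁻¹ *
      (Matrix.of fun (k : Fin r) (i : Fin m) => if p k = i then (1:ℝ) else 0))) *
      (Pfull * ((cdiag (sigH σ r) : Matrix (Fin m) (Fin n) ℝ) * Qfullᵀ)) =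
      Pfull * ((cdiag (sigH σ r) : Matrix (Fin m) (Fin n) ℝ) * Qfullᵀ) := by
    have hh : Pfull * ((cdiag (sigH σ r) : Matrix (Fin m) (Fin n) ℝ) * Qfullᵀ) =
        P * ((cdiag σ : Matrix (Fin r) (Fin n) ℝ) * Qfullᵀ) := by
      rw [e1p]
      simp only [Matrix.mul_assoc]
      rw [← Matrix.mul_assoc, ← hPJ]
    rw [hh]
    simp only [Matrix.mul_assoc]
    rw [← Matrix.mul_assoc (Matrix.of fun (k : Fin r) (i : Fin m) =>
      if p k = i then (1:ℝ) else 0) P, hTpP, ← Matrix.mul_assoc ((P.submatrix p id)⁻¹),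
      hPpinv, Matrix.one_mul]
  have hTailP : Pfull * ((cdiag (sigT σ r) : Matrix (Fin m) (Fin n) ℝ) * Qfullᵀ) =
      (Pfull * (cdiag (kap r) : Matrix (Fin m) (Fin m) ℝ)) *
        ((cdiag (sigT σ r) : Matrix (Fin m) (Fin n) ℝ) * Qfullᵀ) := by
    simp only [Matrix.mul_assoc]
    rw [← Matrix.mul_assoc (cdiag (kap r)), e3p]
  have hcoreP : W - (P * ((P.submatrix p id)⁻¹ *
      (Matrix.of fun (k : Fin r) (i : Fin m) => if p k = i then (1:ℝ) else 0))) * W =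
      (Pfull * (cdiag (kap r) : Matrix (Fin m) (Fin m) ℝ) - P * (P.submatrix p id)⁻¹ *
        (Pfull * (cdiag (kap r) : Matrix (Fin m) (Fin m) ℝ)).submatrix p id) *
        ((cdiag (sigT σ r) : Matrix (Fin m) (Fin n) ℝ) * Qfullᵀ) := by
    calc W - (P * ((P.submatrix p id)⁻¹ *
        (Matrix.of fun (k : Fin r) (i : Fin m) => if p k = i then (1:ℝ) else 0))) * W =
        Pfull * ((cdiag (sigT σ r) : Matrix (Fin m) (Fin n) ℝ) * Qfullᵀ) -
          (P * ((P.submatrix p id)⁻¹ *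
            (Matrix.of fun (k : Fin r) (i : Fin m) => if p k = i then (1:ℝ) else 0))) *
          (Pfull * ((cdiag (sigT σ r) : Matrix (Fin m) (Fin n) ℝ) * Qfullᵀ)) := by
          conv_lhs => rw [hW]
          rw [Matrix.mul_add, hHeadP]
          abel
    _ = (Pfull * (cdiag (kap r) : Matrix (Fin m) (Fin m) ℝ) - P * (P.submatrix p id)⁻¹ *
        (Pfull * (cdiag (kap r) : Matrix (Fin m) (Fin m) ℝ)).submatrix p id) *
        ((cdiag (sigT σ r) : Matrix (Fin m) (Fin n) ℝ) * Qfullᵀ) := by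
          have hYE : (P * ((P.submatrix p id)⁻¹ *
              (Matrix.of fun (k : Fin r) (i : Fin m) => if p k = i then (1:ℝ) else 0))) *
              (Pfull * ((cdiag (sigT σ r) : Matrix (Fin m) (Fin n) ℝ) * Qfullᵀ)) =
              (P * (P.submatrix p id)⁻¹ *
                (Pfull * (cdiag (kap r) : Matrix (Fin m) (Fin m) ℝ)).submatrix p id) *
              ((cdiag (sigT σ r) : Matrix (Fin m) (Fin n) ℝ) * Qfullᵀ) := by
            have hAV2p : (P * ((P.submatrix p id)⁻¹ *
                (Matrix.of fun (k : Fin r) (i : Fin m) => if p k = i then (1:ℝ) else 0))) *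
                (Pfull * (cdiag (kap r) : Matrix (Fin m) (Fin m) ℝ)) =
                P * (P.submatrix p id)⁻¹ *
                  (Pfull * (cdiag (kap r) : Matrix (Fin m) (Fin m) ℝ)).submatrix p id := by
              simp only [Matrix.mul_assoc]
              rw [hTpV2p]
            rw [hTailP, ← Matrix.mul_assoc _ (Pfull *
              (cdiag (kap r) : Matrix (Fin m) (Fin m) ℝ)), hAV2p]
          rw [Matrix.sub_mul, ← hTailP, ← hYE]
  -- norm facts
  have hPfb : ‖Pfull‖ ≤ 1 := specNorm_orth_le_one hPorth
  have hQfTb : ‖Qfullᵀ‖ ≤ 1 := specNorm_orth_le_one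
    (by rw [Matrix.transpose_transpose]; exact hQfull2)
  have hMQtb : ‖(Qfull * (cdiag (kap r) : Matrix (Fin n) (Fin n) ℝ) - Q * (Q.submatrix q id)⁻¹ *
      (Qfull * (cdiag (kap r) : Matrix (Fin n) (Fin n) ℝ)).submatrix q id)ᵀ‖ ≤
      ‖(Q.submatrix q id)⁻¹‖ := by
    rw [specNorm_transpose]; exact hMQ
  have hCCidem : (C * Cd) * (C * Cd) = C * Cd := by
    rw [← Matrix.mul_assoc, hCd.1]
  have hCCb : ‖C * Cd‖ ≤ 1 := specNorm_sym_idem_le_one hCd.2.2.1 hCCidem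
  have hJ1b : ‖(1 : Matrix (Fin m) (Fin m) ℝ) - C * Cd‖ ≤ 1 := by
    apply specNorm_sym_idem_le_one
    · rw [Matrix.transpose_sub, Matrix.transpose_one, hCd.2.2.1]
    · rw [Matrix.sub_mul, Matrix.one_mul, Matrix.mul_sub, Matrix.mul_one, hCCidem]
      abel
  have hRRidem : (Rd * R) * (Rd * R) = Rd * R := by
    rw [← Matrix.mul_assoc, hRd.2.1]
  have hJ2b : ‖(1 : Matrix (Fin n) (Fin n) ℝ) - Rd * R‖ ≤ 1 := by
    apply specNorm_sym_idem_le_one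
    · rw [Matrix.transpose_sub, Matrix.transpose_one, hRd.2.2.2]
    · rw [Matrix.sub_mul, Matrix.one_mul, Matrix.mul_sub, Matrix.mul_one, hRRidem]
      abel
  -- bound 1
  have hWXb : ‖W - W * ((Matrix.of fun (j : Fin n) (k : Fin r) => if q k = j then (1:ℝ) else 0) *
      (((Q.submatrix q id)ᵀ)⁻¹ * Qᵀ))‖ ≤ σ r * ‖(Q.submatrix q id)⁻¹‖ := by
    rw [hcoreQ, ← Matrix.mul_assoc]
    calc ‖Pfull * (cdiag (sigT σ r) : Matrix (Fin m) (Fin n) ℝ) *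
        (Qfull * (cdiag (kap r) : Matrix (Fin n) (Fin n) ℝ) - Q * (Q.submatrix q id)⁻¹ *
          (Qfull * (cdiag (kap r) : Matrix (Fin n) (Fin n) ℝ)).submatrix q id)ᵀ‖ ≤
        ‖Pfull‖ * ‖(cdiag (sigT σ r) : Matrix (Fin m) (Fin n) ℝ)‖ *
        ‖(Qfull * (cdiag (kap r) : Matrix (Fin n) (Fin n) ℝ) - Q * (Q.submatrix q id)⁻¹ *
          (Qfull * (cdiag (kap r) : Matrix (Fin n) (Fin n) ℝ)).submatrix q id)ᵀ‖ :=
        specNorm_mul3_le _ _ _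
    _ ≤ 1 * σ r * ‖(Q.submatrix q id)⁻¹‖ := by
        apply mul_le_mul _ hMQtb (norm_nonneg _) (by positivity)
        exact mul_le_mul hPfb hStb (norm_nonneg _) zero_le_one
    _ = σ r * ‖(Q.submatrix q id)⁻¹‖ := by ring
  have hWX_C : W * ((Matrix.of fun (j : Fin n) (k : Fin r) => if q k = j then (1:ℝ) else 0) *
      (((Q.submatrix q id)ᵀ)⁻¹ * Qᵀ)) = C * (((Q.submatrix q id)ᵀ)⁻¹ * Qᵀ) := by
    rw [← Matrix.mul_assoc, hWSq]
  have hT1eq : W - C * Cd * W = ((1 : Matrix (Fin m) (Fin m) ℝ) - C * Cd) *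
      (W - W * ((Matrix.of fun (j : Fin n) (k : Fin r) => if q k = j then (1:ℝ) else 0) *
        (((Q.submatrix q id)ᵀ)⁻¹ * Qᵀ))) := by
    have hCC : (C * Cd) * (W * ((Matrix.of fun (j : Fin n) (k : Fin r) =>
        if q k = j then (1:ℝ) else 0) * (((Q.submatrix q id)ᵀ)⁻¹ * Qᵀ))) =
        W * ((Matrix.of fun (j : Fin n) (k : Fin r) => if q k = j then (1:ℝ) else 0) *
          (((Q.submatrix q id)ᵀ)⁻¹ * Qᵀ)) := by
      rw [hWX_C, ← Matrix.mul_assoc, hCd.1]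
    rw [Matrix.sub_mul, Matrix.one_mul, Matrix.mul_sub, hCC]
    abel
  have hb1 : ‖W - C * Cd * W‖ ≤ σ r * ‖(Q.submatrix q id)⁻¹‖ := by
    rw [hT1eq]
    calc ‖((1 : Matrix (Fin m) (Fin m) ℝ) - C * Cd) *
        (W - W * ((Matrix.of fun (j : Fin n) (k : Fin r) => if q k = j then (1:ℝ) else 0) *
          (((Q.submatrix q id)ᵀ)⁻¹ * Qᵀ)))‖ ≤
        ‖(1 : Matrix (Fin m) (Fin m) ℝ) - C * Cd‖ *
        ‖W - W * ((Matrix.of fun (j : Fin n) (k : Fin r) => if q k = j then (1:ℝ) else 0) *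
          (((Q.submatrix q id)ᵀ)⁻¹ * Qᵀ))‖ := Matrix.l2_opNorm_mul _ _
    _ ≤ 1 * (σ r * ‖(Q.submatrix q id)⁻¹‖) :=
        mul_le_mul hJ1b hWXb (norm_nonneg _) zero_le_one
    _ = σ r * ‖(Q.submatrix q id)⁻¹‖ := one_mul _
  -- bound 2
  have hWYb : ‖W - (P * ((P.submatrix p id)⁻¹ *
      (Matrix.of fun (k : Fin r) (i : Fin m) => if p k = i then (1:ℝ) else 0))) * W‖ ≤
      σ r * ‖(P.submatrix p id)⁻¹‖ := by
    rw [hcoreP, ← Matrix.mul_assoc]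
    calc ‖(Pfull * (cdiag (kap r) : Matrix (Fin m) (Fin m) ℝ) - P * (P.submatrix p id)⁻¹ *
        (Pfull * (cdiag (kap r) : Matrix (Fin m) (Fin m) ℝ)).submatrix p id) *
        (cdiag (sigT σ r) : Matrix (Fin m) (Fin n) ℝ) * Qfullᵀ‖ ≤
        ‖Pfull * (cdiag (kap r) : Matrix (Fin m) (Fin m) ℝ) - P * (P.submatrix p id)⁻¹ *
          (Pfull * (cdiag (kap r) : Matrix (Fin m) (Fin m) ℝ)).submatrix p id‖ *
        ‖(cdiag (sigT σ r) : Matrix (Fin m) (Fin n) ℝ)‖ * ‖Qfullᵀ‖ :=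
        specNorm_mul3_le _ _ _
    _ ≤ ‖(P.submatrix p id)⁻¹‖ * σ r * 1 := by
        apply mul_le_mul _ hQfTb (norm_nonneg _) (by positivity)
        exact mul_le_mul hMP hStb (norm_nonneg _) (norm_nonneg _)
    _ = σ r * ‖(P.submatrix p id)⁻¹‖ := by ring
  have hRkill : ((P * ((P.submatrix p id)⁻¹ *
      (Matrix.of fun (k : Fin r) (i : Fin m) => if p k = i then (1:ℝ) else 0))) * W) *
      ((1 : Matrix (Fin n) (Fin n) ℝ) - Rd * R) = 0 := by
    have h1 : (P * ((P.submatrix p id)⁻¹ *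
        (Matrix.of fun (k : Fin r) (i : Fin m) => if p k = i then (1:ℝ) else 0))) * W =
        P * ((P.submatrix p id)⁻¹ * R) := by
      simp only [Matrix.mul_assoc]
      rw [hTpW]
    have h2 : R * ((1 : Matrix (Fin n) (Fin n) ℝ) - Rd * R) = 0 := by
      rw [Matrix.mul_sub, Matrix.mul_one, ← Matrix.mul_assoc, hRd.1, sub_self]
    rw [h1]
    simp only [Matrix.mul_assoc]
    rw [h2, Matrix.mul_zero, Matrix.mul_zero]
  have hT2eq : W - W * (Rd * R) = (W - (P * ((P.submatrix p id)⁻¹ *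
      (Matrix.of fun (k : Fin r) (i : Fin m) => if p k = i then (1:ℝ) else 0))) * W) *
      ((1 : Matrix (Fin n) (Fin n) ℝ) - Rd * R) := by
    rw [Matrix.sub_mul, hRkill, sub_zero, Matrix.mul_sub, Matrix.mul_one]
  have hWRb : ‖W - W * (Rd * R)‖ ≤ σ r * ‖(P.submatrix p id)⁻¹‖ := by
    rw [hT2eq]
    calc ‖(W - (P * ((P.submatrix p id)⁻¹ *
        (Matrix.of fun (k : Fin r) (i : Fin m) => if p k = i then (1:ℝ) else 0))) * W) *
        ((1 : Matrix (Fin n) (Fin n) ℝ) - Rd * R)‖ ≤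
        ‖W - (P * ((P.submatrix p id)⁻¹ *
          (Matrix.of fun (k : Fin r) (i : Fin m) => if p k = i then (1:ℝ) else 0))) * W‖ *
        ‖(1 : Matrix (Fin n) (Fin n) ℝ) - Rd * R‖ := Matrix.l2_opNorm_mul _ _
    _ ≤ (σ r * ‖(P.submatrix p id)⁻¹‖) * 1 :=
        mul_le_mul hWYb hJ2b (norm_nonneg _) (by positivity)
    _ = σ r * ‖(P.submatrix p id)⁻¹‖ := mul_one _
  have hb2 : ‖(C * Cd) * (W - W * (Rd * R))‖ ≤ σ r * ‖(P.submatrix p id)⁻¹‖ := by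
    calc ‖(C * Cd) * (W - W * (Rd * R))‖ ≤ ‖C * Cd‖ * ‖W - W * (Rd * R)‖ :=
        Matrix.l2_opNorm_mul _ _
    _ ≤ 1 * (σ r * ‖(P.submatrix p id)⁻¹‖) :=
        mul_le_mul hCCb hWRb (norm_nonneg _) zero_le_one
    _ = σ r * ‖(P.submatrix p id)⁻¹‖ := one_mul _
  -- final assembly
  have hsplitW : W - C * U * R = (W - C * Cd * W) + (C * Cd) * (W - W * (Rd * R)) := by
    rw [hU]
    simp only [Matrix.mul_sub, Matrix.mul_assoc]
    abel
  calc ‖W - C * U * R‖ = ‖(W - C * Cd * W) + (C * Cd) * (W - W * (Rd * R))‖ := by rw [hsplitW]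
  _ ≤ ‖W - C * Cd * W‖ + ‖(C * Cd) * (W - W * (Rd * R))‖ := norm_add_le _ _
  _ ≤ σ r * ‖(Q.submatrix q id)⁻¹‖ + σ r * ‖(P.submatrix p id)⁻¹‖ := add_le_add hb1 hb2
  _ = (‖(P.submatrix p id)⁻¹‖ + ‖(Q.submatrix q id)⁻¹‖) * σ r := by ring
end

section
/- Let K be a compact subset of ℝ^m, let μ be a Borel probability measure supported on K, and let γ : ℝ → ℝ be L-Lipschitz for some L ≥ 0. Let W be a real m×h matrix, A a real m×h matrix (the CUR approximation C U R of W), and W₂ ∈ ℝ^h. Define f_W(x) = γ(xW)·W₂ and f_A(x) = γ(xA)·W₂ for row vectors x ∈ ℝ^m, where γ is applied entrywise. Suppose f : K → ℝ is continuous and (i) ∫_K (f(x) − f_W(x))² dμ ≤ ε², (ii) ‖W − A‖₂ ≤ (η_p + η_q) σ_{r+1} for real constants η_p, η_q ≥ 0 and σ_{r+1} ≥ 0, and (iii) σ_{r+1} ≤ δ / (L (η_p + η_q) ‖W₂‖₂ ‖K‖₂), where ‖K‖₂ = sup_{x∈K} ‖x‖₂ and δ ≥ 0. Then ∫_K (f(x)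 − f_A(x))² dμ ≤ (ε + δ)². -/
open Matrix MeasureTheory

/-- The Euclidean (ℓ²) norm of a real vector. -/
noncomputable def euclNorm {n : ℕ} (v : Fin n → ℝ) : ℝ :=
  Real.sqrt (∑ i, (v i) ^ 2)

/-- The one-hidden-layer network output `f_W(x) = γ(xW)·W₂` for a row vector
`x ∈ ℝ^m`, with `γ : ℝ → ℝ` applied entrywise. -/
noncomputable def netOut {m h : ℕ} (γ : ℝ → ℝ) (W : Matrix (Fin m) (Fin h) ℝ)
    (W₂ : Fin h → ℝ) (x : Fin m → ℝ) : ℝ :=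
  (fun j => γ (Matrix.vecMul x W j)) ⬝ᵥ W₂

/-! On `K` the two networks differ by at most `δ` pointwise: `γ` is `L`-Lipschitz, so the hidden
layers differ in `ℓ²` by at most `L ‖W - A‖₂ ‖x‖₂ ≤ L (η_p + η_q) σ ‖K‖₂`, and Cauchy–Schwarz
against `W₂` together with (iii) bounds the outputs' gap by `δ`. Minkowski's inequality in
`L²(μ|_K)` then adds this gap to the `ε` of (i). -/

open scoped Matrix.Norms.L2Operator

lemma euclNorm_eq_norm_toLp {n : ℕ} (v : Fin n → ℝ) :
    euclNorm v = ‖(WithLp.toLp 2 v : EuclideanSpace ℝ (Fin n))‖ := by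
  simp [EuclideanSpace.norm_eq, euclNorm]

lemma euclNorm_nonneg {n : ℕ} (v : Fin n → ℝ) : 0 ≤ euclNorm v :=
  Real.sqrt_nonneg _

lemma continuous_euclNorm {n : ℕ} : Continuous (euclNorm (n := n)) := by
  simp only [funext euclNorm_eq_norm_toLp]
  fun_prop

lemma abs_dotProduct_le {n : ℕ} (u v : Fin n → ℝ) :
    |u ⬝ᵥ v| ≤ euclNorm u * euclNorm v := by
  rw [euclNorm_eq_norm_toLp, euclNorm_eq_norm_toLp]
  simpa [EuclideanSpace.inner_toLp_toLp, dotProduct_comm] using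
    abs_real_inner_le_norm (WithLp.toLp 2 u : EuclideanSpace ℝ (Fin n)) (WithLp.toLp 2 v)

lemma euclNorm_le_mul_of_abs_le {n : ℕ} {u v : Fin n → ℝ} {c : ℝ} (hc : 0 ≤ c)
    (h : ∀ i, |u i| ≤ c * |v i|) : euclNorm u ≤ c * euclNorm v := by
  rw [euclNorm, euclNorm, ← Real.sqrt_sq hc, ← Real.sqrt_mul (sq_nonneg c), Finset.mul_sum]
  gcongr with i
  rw [← sq_abs (u i), ← sq_abs (v i), ← mul_pow]
  exact pow_le_pow_left₀ (abs_nonneg _) (h i) 2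

lemma euclNorm_vecMul_le {m h : ℕ} (x : Fin m → ℝ) (M : Matrix (Fin m) (Fin h) ℝ) :
    euclNorm (x ᵥ* M) ≤ specNorm M * euclNorm x := by
  have hT : specNorm M = ‖Mᵀ‖ := by
    rw [← conjTranspose_eq_transpose_of_trivial, l2_opNorm_conjTranspose]; rfl
  rw [hT, euclNorm_eq_norm_toLp, euclNorm_eq_norm_toLp, ← mulVec_transpose]
  exact l2_opNorm_mulVec Mᵀ (WithLp.toLp 2 x)

lemma nonneg_of_abs_sub_le_mul {γ : ℝ → ℝ} {L : ℝ} (hγ : ∀ a b : ℝ, |γ a - γ b| ≤ L * |a - b|) :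
    0 ≤ L := by
  simpa using (abs_nonneg _).trans (hγ 1 0)

lemma continuous_of_abs_sub_le_mul {γ : ℝ → ℝ} {L : ℝ}
    (hγ : ∀ a b : ℝ, |γ a - γ b| ≤ L * |a - b|) : Continuous γ := by
  refine (LipschitzWith.of_dist_le_mul fun a b => ?_).continuous (K := L.toNNReal)
  rw [Real.dist_eq, Real.dist_eq, Real.coe_toNNReal L (nonneg_of_abs_sub_le_mul hγ)]
  exact hγ a b

lemma continuous_netOut {m h : ℕ} {γ : ℝ → ℝ} (hγ : Continuous γ)
    (W : Matrix (Fin m) (Fin h) ℝ) (W₂ : Fin h → ℝ) : Continuous (netOut γ W W₂) := by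
  unfold netOut vecMul dotProduct
  fun_prop

lemma abs_netOut_sub_netOut_le {m h : ℕ} {γ : ℝ → ℝ} {L : ℝ}
    (hγ : ∀ a b : ℝ, |γ a - γ b| ≤ L * |a - b|)
    (W A : Matrix (Fin m) (Fin h) ℝ) (W₂ : Fin h → ℝ) (x : Fin m → ℝ) :
    |netOut γ W W₂ x - netOut γ A W₂ x| ≤
      L * specNorm (W - A) * euclNorm W₂ * euclNorm x := by
  have hL := nonneg_of_abs_sub_le_mul hγ
  have hlip : euclNorm (fun j => γ ((x ᵥ* W) j) - γ ((x ᵥ* A) j)) ≤ L * euclNorm (x ᵥ* (W - A)) :=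
    euclNorm_le_mul_of_abs_le hL fun j => by
      simpa only [vecMul_sub, Pi.sub_apply] using hγ _ _
  calc |netOut γ W W₂ x - netOut γ A W₂ x|
      = |(fun j => γ ((x ᵥ* W) j) - γ ((x ᵥ* A) j)) ⬝ᵥ W₂| := by
        rw [netOut, netOut, ← sub_dotProduct]; rfl
    _ ≤ L * euclNorm (x ᵥ* (W - A)) * euclNorm W₂ :=
        (abs_dotProduct_le _ _).trans (by gcongr; exact euclNorm_nonneg _)
    _ ≤ L * (specNorm (W - A) * euclNorm x) * euclNorm W₂ := by
        gcongr
        · exact euclNorm_nonneg _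
        · exact euclNorm_vecMul_le x (W - A)
    _ = L * specNorm (W - A) * euclNorm W₂ * euclNorm x := by ring

section L2

variable {α : Type*} [MeasurableSpace α] {ν : Measure α}

lemma sqrt_integral_sq_eq_toReal_eLpNorm {g : α → ℝ} (hg : MemLp g 2 ν) :
    √(∫ x, g x ^ 2 ∂ν) = (eLpNorm g 2 ν).toReal := by
  rw [hg.eLpNorm_eq_integral_rpow_norm two_ne_zero ENNReal.ofNat_ne_top,
    ENNReal.toReal_ofReal (by positivity), Real.sqrt_eq_rpow]
  norm_num [Real.rpow_two, sq_abs]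

lemma sqrt_integral_sq_add_le {g q : α → ℝ} (hg : MemLp g 2 ν) (hq : MemLp q 2 ν) :
    √(∫ x, (g x + q x) ^ 2 ∂ν) ≤ √(∫ x, g x ^ 2 ∂ν) + √(∫ x, q x ^ 2 ∂ν) := by
  have hgq : √(∫ x, (g x + q x) ^ 2 ∂ν) = (eLpNorm (g + q) 2 ν).toReal :=
    sqrt_integral_sq_eq_toReal_eLpNorm (hg.add hq)
  rw [hgq, sqrt_integral_sq_eq_toReal_eLpNorm hg, sqrt_integral_sq_eq_toReal_eLpNorm hq,
    ← Lp.norm_toLp _ (hg.add hq), ← Lp.norm_toLp g hg, ← Lp.norm_toLp q hq, MemLp.toLp_add]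
  exact norm_add_le _ _

lemma integral_sq_add_le_sq_add {g q : α → ℝ} (hg : MemLp g 2 ν) (hq : MemLp q 2 ν)
    {a b : ℝ} (ha : 0 ≤ a) (hb : 0 ≤ b) (hga : ∫ x, g x ^ 2 ∂ν ≤ a ^ 2)
    (hqb : ∫ x, q x ^ 2 ∂ν ≤ b ^ 2) : ∫ x, (g x + q x) ^ 2 ∂ν ≤ (a + b) ^ 2 := by
  refine (Real.sqrt_le_left (by positivity)).mp ?_
  calc √(∫ x, (g x + q x) ^ 2 ∂ν) ≤ √(∫ x, g x ^ 2 ∂ν) + √(∫ x, q x ^ 2 ∂ν) :=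
        sqrt_integral_sq_add_le hg hq
    _ ≤ a + b := add_le_add ((Real.sqrt_le_left ha).mpr hga) ((Real.sqrt_le_left hb).mpr hqb)

end L2

lemma ContinuousOn.memLp_restrict_of_isCompact {X : Type*} [TopologicalSpace X]
    [MeasurableSpace X] [OpensMeasurableSpace X] [T2Space X] {μ : Measure X}
    [IsFiniteMeasureOnCompacts μ] {K : Set X} (hK : IsCompact K) {g : X → ℝ}
    (hg : ContinuousOn g K) (p : ENNReal) : MemLp g p (μ.restrict K) := by
  have : IsFiniteMeasure (μ.restrict K) := ⟨by simpa using hK.measure_lt_top⟩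
  obtain ⟨C, hC⟩ := hK.exists_bound_of_continuousOn hg
  exact MemLp.of_bound (hg.aestronglyMeasurable hK.measurableSet) C
    ((ae_restrict_iff' hK.measurableSet).mpr (ae_of_all _ hC))

lemma setIntegral_sq_le_sq_of_abs_le {X : Type*} [MeasurableSpace X] {μ : Measure X}
    [IsProbabilityMeasure μ] {K : Set X} {q : X → ℝ} {δ : ℝ} (hq : ∀ x ∈ K, |q x| ≤ δ) :
    ∫ x in K, q x ^ 2 ∂μ ≤ δ ^ 2 := by
  have hbound : ∀ x ∈ K, ‖q x ^ 2‖ ≤ δ ^ 2 := fun x hx => by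
    rw [Real.norm_eq_abs, abs_pow]
    exact pow_le_pow_left₀ (abs_nonneg _) (hq x hx) 2
  calc ∫ x in K, q x ^ 2 ∂μ ≤ ‖∫ x in K, q x ^ 2 ∂μ‖ := Real.le_norm_self _
    _ ≤ δ ^ 2 * μ.real K := norm_setIntegral_le_of_norm_le_const (measure_lt_top μ K) hbound
    _ ≤ δ ^ 2 := mul_le_of_le_one_right (sq_nonneg δ) measureReal_le_one

lemma euclNorm_le_sSup_image {m : ℕ} {K : Set (Fin m → ℝ)} (hK : IsCompact K) {x : Fin m → ℝ}
    (hx : x ∈ K) : euclNorm x ≤ sSup (euclNorm '' K) :=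
  le_csSup (hK.image continuous_euclNorm).bddAbove (Set.mem_image_of_mem _ hx)

theorem cur_network_approximation_bound_general {m h : ℕ}
    (K : Set (Fin m → ℝ)) (hK : IsCompact K)
    (μ : Measure (Fin m → ℝ)) [IsProbabilityMeasure μ]
    (γ : ℝ → ℝ) (L : ℝ)
    (hγ : ∀ a b : ℝ, |γ a - γ b| ≤ L * |a - b|)
    (W A : Matrix (Fin m) (Fin h) ℝ) (W₂ : Fin h → ℝ)
    (f : (Fin m → ℝ) → ℝ) (hf : ContinuousOn f K)
    (ε δ ηp ηq σ : ℝ) (hε : 0 ≤ ε) (hδ : 0 ≤ δ)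
    (hηp : 0 ≤ ηp) (hηq : 0 ≤ ηq)
    (h1 : ∫ x in K, (f x - netOut γ W W₂ x) ^ 2 ∂μ ≤ ε ^ 2)
    (h2 : specNorm (W - A) ≤ (ηp + ηq) * σ)
    (h3 : σ ≤ δ / (L * (ηp + ηq) * euclNorm W₂ * sSup (euclNorm '' K))) :
    ∫ x in K, (f x - netOut γ A W₂ x) ^ 2 ∂μ ≤ (ε + δ) ^ 2 := by
  have hL := nonneg_of_abs_sub_le_mul hγ
  have hnet (M : Matrix (Fin m) (Fin h) ℝ) : Continuous (netOut γ M W₂) :=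
    continuous_netOut (continuous_of_abs_sub_le_mul hγ) M W₂
  have hgap : ∀ x ∈ K, |netOut γ W W₂ x - netOut γ A W₂ x| ≤ δ := fun x hx => by
    have hS := euclNorm_le_sSup_image hK hx
    have hS0 := (euclNorm_nonneg x).trans hS
    have hW₂ := euclNorm_nonneg W₂
    have hspec : 0 ≤ specNorm (W - A) := norm_nonneg _
    calc |netOut γ W W₂ x - netOut γ A W₂ x|
        ≤ L * specNorm (W - A) * euclNorm W₂ * euclNorm x := abs_netOut_sub_netOut_le hγ W A W₂ x
      _ ≤ L * specNorm (W - A) * euclNorm W₂ * sSup (euclNorm '' K) := by gcongr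
      _ ≤ L * ((ηp + ηq) * σ) * euclNorm W₂ * sSup (euclNorm '' K) := by gcongr
      _ = σ * (L * (ηp + ηq) * euclNorm W₂ * sSup (euclNorm '' K)) := by ring
      _ ≤ δ := mul_le_of_le_div₀ hδ (by positivity) h3
  have key := integral_sq_add_le_sq_add
    ((hf.sub (hnet W).continuousOn).memLp_restrict_of_isCompact (μ := μ) hK 2)
    (((hnet W).sub (hnet A)).continuousOn.memLp_restrict_of_isCompact (μ := μ) hK 2)
    hε hδ h1 (setIntegral_sq_le_sq_of_abs_le hgap)
  simpa only [Pi.sub_apply, sub_add_sub_cancel] using key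

/-- Let `K ⊆ ℝ^m` be compact, `μ` a Borel probability measure supported on `K`,
and `γ : ℝ → ℝ` `L`-Lipschitz with `L ≥ 0`.  Let `W`, `A` be real `m×h`
matrices (with `A` the CUR approximation `C U R` of `W`) and `W₂ ∈ ℝ^h`, and
set `f_W(x) = γ(xW)·W₂`, `f_A(x) = γ(xA)·W₂`.  Suppose `f : K → ℝ` is
continuous and
(i) `∫_K (f(x) − f_W(x))² dμ ≤ ε²`,
(ii) `‖W − A‖₂ ≤ (η_p + η_q)·σ_{r+1}` with `η_p, η_q ≥ 0`, `σ_{r+1} ≥ 0`, and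
(iii) `σ_{r+1} ≤ δ / (L·(η_p + η_q)·‖W₂‖₂·‖K‖₂)` with `δ ≥ 0`,
where `‖K‖₂ = sup_{x∈K} ‖x‖₂.  Then `∫_K (f(x) − f_A(x))² dμ ≤ (ε + δ)²`. -/
theorem cur_network_approximation_bound {m h : ℕ}
    (K : Set (Fin m → ℝ)) (hK : IsCompact K)
    (μ : Measure (Fin m → ℝ)) [IsProbabilityMeasure μ] (hμK : μ Kᶜ = 0)
    (γ : ℝ → ℝ) (L : ℝ) (hL : 0 ≤ L)
    (hγ : ∀ a b : ℝ, |γ a - γ b| ≤ L * |a - b|)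
    (W A : Matrix (Fin m) (Fin h) ℝ) (W₂ : Fin h → ℝ)
    (f : (Fin m → ℝ) → ℝ) (hf : ContinuousOn f K)
    (ε δ ηp ηq σ : ℝ) (hε : 0 ≤ ε) (hδ : 0 ≤ δ)
    (hηp : 0 ≤ ηp) (hηq : 0 ≤ ηq) (hσ : 0 ≤ σ)
    (h1 : ∫ x in K, (f x - netOut γ W W₂ x) ^ 2 ∂μ ≤ ε ^ 2)
    (h2 : specNorm (W - A) ≤ (ηp + ηq) * σ)
    (h3 : σ ≤ δ / (L * (ηp + ηq) * euclNorm W₂ * sSup (euclNorm '' K))) :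
    ∫ x in K, (f x - netOut γ A W₂ x) ^ 2 ∂μ ≤ (ε + δ) ^ 2 :=
  cur_network_approximation_bound_general K hK μ γ L hγ W A W₂ f hf ε δ ηp ηq σ hε hδ hηp hηq h1 h2
    h3
end

section
/- Let X be a real b×m matrix (a batch of b inputs), let W and A be real m×h matrices, let W₂ be a real h×d matrix, and let γ : ℝ → ℝ be L-Lipschitz, applied entrywise to matrices. Then the mean squared error satisfies (1/b)·‖γ(XW)W₂ − γ(XA)W₂‖_F² ≤ (1/b)·L²·‖X‖_F²·‖W₂‖_F²·‖W − A‖_F². In particular, taking A = C U R for matrices C ∈ ℝ^{m×r}, U ∈ ℝ^{r×r}, R ∈ ℝ^{r×h}, the MSE between the original network output γ(XW)W₂ and the CUR-network output γ(X C U R)W₂ is bounded by (1/b)·L²·‖X‖_F²·‖W₂‖_F²·L(U), where L(U) = ‖W − C U R‖_F². -/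
open Matrix

/-- The Frobenius norm of a real matrix: the square root of the sum of the
squares of all entries. -/
noncomputable def frobNorm {a b : ℕ} (A : Matrix (Fin a) (Fin b) ℝ) : ℝ :=
  Real.sqrt (∑ i, ∑ j, (A i j) ^ 2)


noncomputable def frobSq {a b : ℕ} (A : Matrix (Fin a) (Fin b) ℝ) : ℝ :=
  ∑ i, ∑ j, (A i j) ^ 2

lemma frobSq_nonneg {a b : ℕ} (A : Matrix (Fin a) (Fin b) ℝ) : 0 ≤ frobSq A := by
  apply Finset.sum_nonneg; intro i _
  apply Finset.sum_nonneg; intro j _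
  positivity

lemma frobSq_mul {a b c : ℕ} (M : Matrix (Fin a) (Fin b) ℝ)
    (N : Matrix (Fin b) (Fin c) ℝ) : frobSq (M * N) ≤ frobSq M * frobSq N := by
  have key : ∀ i j, ((M * N) i j) ^ 2 ≤ (∑ k, (M i k)^2) * (∑ k, (N k j)^2) := by
    intro i j
    simpa [Matrix.mul_apply] using
      Finset.sum_mul_sq_le_sq_mul_sq Finset.univ (fun k => M i k) (fun k => N k j)
  calc frobSq (M * N) ≤ ∑ i, ∑ j, (∑ k, (M i k)^2) * (∑ k, (N k j)^2) := by
        apply Finset.sum_le_sum; intro i _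
        exact Finset.sum_le_sum fun j _ => key i j
    _ = frobSq M * frobSq N := by
        rw [frobSq, frobSq,
          show (∑ k, ∑ j, (N k j)^2) = ∑ j, ∑ k, (N k j)^2 from Finset.sum_comm,
          Finset.sum_mul_sum]

lemma frobSq_map_sub_le {a b : ℕ} (P Q : Matrix (Fin a) (Fin b) ℝ)
    (γ : ℝ → ℝ) (L : ℝ)
    (hγ : ∀ x y : ℝ, |γ x - γ y| ≤ L * |x - y|) :
    frobSq (P.map γ - Q.map γ) ≤ L ^ 2 * frobSq (P - Q) := by
  rw [frobSq, frobSq, Finset.mul_sum]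
  apply Finset.sum_le_sum; intro i _
  rw [Finset.mul_sum]
  apply Finset.sum_le_sum; intro j _
  have h := hγ (P i j) (Q i j)
  have : (γ (P i j) - γ (Q i j))^2 ≤ (L * |P i j - Q i j|)^2 := by
    rw [← sq_abs]
    apply pow_le_pow_left₀ (abs_nonneg _) h _
  simpa [Matrix.sub_apply, Matrix.map_apply, mul_pow] using this

lemma frobNorm_sq {a b : ℕ} (A : Matrix (Fin a) (Fin b) ℝ) :
    frobNorm A ^ 2 = frobSq A := Real.sq_sqrt (frobSq_nonneg A)

lemma frobSq_core {b m h d : ℕ}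
    (X : Matrix (Fin b) (Fin m) ℝ) (W A : Matrix (Fin m) (Fin h) ℝ)
    (W₂ : Matrix (Fin h) (Fin d) ℝ) (γ : ℝ → ℝ) (L : ℝ)
    (hγ : ∀ x y : ℝ, |γ x - γ y| ≤ L * |x - y|) :
    frobSq ((X * W).map γ * W₂ - (X * A).map γ * W₂) ≤
      L ^ 2 * frobSq X * frobSq W₂ * frobSq (W - A) := by
  have e1 : (X * W).map γ * W₂ - (X * A).map γ * W₂
      = ((X * W).map γ - (X * A).map γ) * W₂ := (Matrix.sub_mul _ _ _).symm
  rw [e1]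
  calc frobSq (((X * W).map γ - (X * A).map γ) * W₂)
      ≤ frobSq ((X * W).map γ - (X * A).map γ) * frobSq W₂ := frobSq_mul _ _
    _ ≤ (L ^ 2 * frobSq (X * W - X * A)) * frobSq W₂ :=
        mul_le_mul_of_nonneg_right (frobSq_map_sub_le _ _ _ _ hγ) (frobSq_nonneg _)
    _ = L ^ 2 * frobSq (X * (W - A)) * frobSq W₂ := by rw [Matrix.mul_sub]
    _ ≤ L ^ 2 * (frobSq X * frobSq (W - A)) * frobSq W₂ := by
        apply mul_le_mul_of_nonneg_right _ (frobSq_nonneg _)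
        exact mul_le_mul_of_nonneg_left (frobSq_mul _ _) (sq_nonneg L)
    _ = L ^ 2 * frobSq X * frobSq W₂ * frobSq (W - A) := by ring

/-- Let `X` be a real `b×m` matrix (a batch of `b` inputs), `W`, `A` real `m×h`
matrices, `W₂` a real `h×d` matrix, and `γ : ℝ → ℝ` an `L`-Lipschitz function
applied entrywise.  Then
`(1/b)·‖γ(XW)W₂ − γ(XA)W₂‖_F² ≤ (1/b)·L²·‖X‖_F²·‖W₂‖_F²·‖W − A‖_F²`.
In particular, taking `A = C U R`, the MSE between the original network output
and the CUR-network output is bounded by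
`(1/b)·L²·‖X‖_F²·‖W₂‖_F²·L(U)` where `L(U) = ‖W − C U R‖_F²`. -/
theorem mse_bounded_by_frobenius_loss {b m h d : ℕ}
    (X : Matrix (Fin b) (Fin m) ℝ) (W A : Matrix (Fin m) (Fin h) ℝ)
    (W₂ : Matrix (Fin h) (Fin d) ℝ)
    (γ : ℝ → ℝ) (L : ℝ) (hL : 0 ≤ L)
    (hγ : ∀ x y : ℝ, |γ x - γ y| ≤ L * |x - y|) :
    ((1 : ℝ) / (b : ℝ)) * frobNorm ((X * W).map γ * W₂ - (X * A).map γ * W₂) ^ 2 ≤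
      ((1 : ℝ) / (b : ℝ)) * L ^ 2 * frobNorm X ^ 2 * frobNorm W₂ ^ 2 *
        frobNorm (W - A) ^ 2 ∧
    ∀ (r : ℕ) (C : Matrix (Fin m) (Fin r) ℝ) (U : Matrix (Fin r) (Fin r) ℝ)
      (R : Matrix (Fin r) (Fin h) ℝ),
      ((1 : ℝ) / (b : ℝ)) *
          frobNorm ((X * W).map γ * W₂ - (X * (C * U * R)).map γ * W₂) ^ 2 ≤
        ((1 : ℝ) / (b : ℝ)) * L ^ 2 * frobNorm X ^ 2 * frobNorm W₂ ^ 2 *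
          frobNorm (W - C * U * R) ^ 2 := by
  constructor
  · have main := frobSq_core X W A W₂ γ L hγ
    have hb : (0:ℝ) ≤ 1 / (b:ℝ) := by positivity
    rw [frobNorm_sq, frobNorm_sq, frobNorm_sq, frobNorm_sq]
    nlinarith [mul_le_mul_of_nonneg_left main hb]
  · intro r C U R
    have main := frobSq_core X W (C * U * R) W₂ γ L hγ
    have hb : (0:ℝ) ≤ 1 / (b:ℝ) := by positivity
    rw [frobNorm_sq, frobNorm_sq, frobNorm_sq, frobNorm_sq]
    nlinarith [mul_le_mul_of_nonneg_left main hb]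
end

section
/- Let W be a real m×n matrix, C a real m×r matrix, and R a real r×n matrix. Then U* = C† W R†, where † denotes the Moore–Penrose pseudoinverse, minimizes the Frobenius-norm error over all r×r matrices: for every U ∈ ℝ^{r×r}, ‖W − C U* R‖_F ≤ ‖W − C U R‖_F. -/
open Matrix

lemma sumSq_eq_trace {a b : ℕ} (A : Matrix (Fin a) (Fin b) ℝ) :
    ∑ i, ∑ j, (A i j) ^ 2 = Matrix.trace (Aᵀ * A) := by
  rw [Finset.sum_comm]
  simp [Matrix.trace, Matrix.mul_apply, Matrix.diag, sq]

lemma sumSq_nonneg {a b : ℕ} (A : Matrix (Fin a) (Fin b) ℝ) :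
    0 ≤ ∑ i, ∑ j, (A i j) ^ 2 := by
  positivity

/-- Let `W` be a real `m×n` matrix, `C` a real `m×r` matrix and `R` a real
`r×n` matrix.  Then `U* = C† W R†` (with `†` the Moore–Penrose pseudoinverse)
minimizes the Frobenius-norm error over all `r×r` matrices: for every
`U ∈ ℝ^{r×r}`, `‖W − C U* R‖_F ≤ ‖W − C U R‖_F`. -/
theorem pseudoinverse_core_optimal {m n r : ℕ} (W : Matrix (Fin m) (Fin n) ℝ)
    (C : Matrix (Fin m) (Fin r) ℝ) (R : Matrix (Fin r) (Fin n) ℝ)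
    (Cd : Matrix (Fin r) (Fin m) ℝ) (Rd : Matrix (Fin n) (Fin r) ℝ)
    (hCd : IsMoorePenrose C Cd) (hRd : IsMoorePenrose R Rd) :
    ∀ U : Matrix (Fin r) (Fin r) ℝ,
      frobNorm (W - C * (Cd * W * Rd) * R) ≤ frobNorm (W - C * U * R) := by
  intro U
  obtain ⟨hC1, hC2, hC3, hC4⟩ := hCd
  obtain ⟨hR1, hR2, hR3, hR4⟩ := hRd
  set E : Matrix (Fin m) (Fin n) ℝ := W - C * (Cd * W * Rd) * R with hE
  set M : Matrix (Fin r) (Fin r) ℝ := Cd * W * Rd - U with hM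
  set D : Matrix (Fin m) (Fin n) ℝ := C * M * R with hD
  have hsplit : W - C * U * R = E + D := by
    simp only [hE, hD, hM, Matrix.mul_sub, Matrix.sub_mul]
    abel
  -- Cᵀ C Cd = Cᵀ
  have hCt : Cᵀ * C * Cd = Cᵀ := by
    calc Cᵀ * C * Cd = Cᵀ * (C * Cd)ᵀ := by rw [hC3, Matrix.mul_assoc]
    _ = (C * Cd * C)ᵀ := by simp [Matrix.transpose_mul, Matrix.mul_assoc]
    _ = Cᵀ := by rw [hC1]
  have hRt : Rd * R * Rᵀ = Rᵀ := by
    calc Rd * R * Rᵀ = (Rd * R)ᵀ * Rᵀ := by rw [hR4]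
    _ = (R * (Rd * R))ᵀ := by simp [Matrix.transpose_mul]
    _ = Rᵀ := by rw [← Matrix.mul_assoc, hR1]
  have hzero : Cᵀ * E * Rᵀ = 0 := by
    have : Cᵀ * E * Rᵀ = Cᵀ * W * Rᵀ - (Cᵀ * C * Cd) * W * (Rd * R * Rᵀ) := by
      simp only [hE, Matrix.mul_sub, Matrix.sub_mul, Matrix.mul_assoc]
    rw [this, hCt, hRt]
    simp
  have htr : Matrix.trace (Eᵀ * D) = 0 := by
    have h1 : Eᵀ * D = Eᵀ * (C * M) * R := by
      simp [hD, Matrix.mul_assoc]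
    rw [h1, Matrix.trace_mul_comm, ← Matrix.mul_assoc, ← Matrix.mul_assoc]
    have h2 : R * Eᵀ * C = (Cᵀ * E * Rᵀ)ᵀ := by
      simp [Matrix.transpose_mul, Matrix.mul_assoc]
    rw [h2, hzero]
    simp
  -- compare sums of squares
  have hsum : ∑ i, ∑ j, (E i j) ^ 2 ≤ ∑ i, ∑ j, ((E + D) i j) ^ 2 := by
    rw [sumSq_eq_trace, sumSq_eq_trace]
    have htr' : Matrix.trace (Dᵀ * E) = 0 := by
      rw [← Matrix.trace_transpose, Matrix.transpose_mul, Matrix.transpose_transpose, htr]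
    have hexp : Matrix.trace ((E + D)ᵀ * (E + D))
        = Matrix.trace (Eᵀ * E) + Matrix.trace (Dᵀ * D) := by
      simp only [Matrix.transpose_add, Matrix.add_mul, Matrix.mul_add,
        Matrix.trace_add, htr, htr']
      ring
    rw [hexp]
    have := sumSq_nonneg D
    rw [sumSq_eq_trace] at this
    linarith
  rw [hsplit]
  exact Real.sqrt_le_sqrt hsum
end
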